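/- Let X and Y be nonnegative bounded random variables with X measurable with respect to 𝓗₁ and Y measurable with respect to 𝓗₂, where ψ(𝓗₁,𝓗₂) ≤ γ. Then E[XY] ≤ (1+γ)·E[X]·E[Y]. -/

import Mathlib

/-!
The ψ-bound gives `μ (A ∩ B) ≤ (1 + γ) μ A μ B` for `A ∈ 𝓗₁`, `B ∈ 𝓗₂`, which is the claim
for `X = a 𝟙_A` and `Y = b 𝟙_B`. Both sides of `∫⁻ f g ≤ c ∫⁻ f ∫⁻ g` are additive and
continuous along increasing sequences in each variable separately, so the inequality extends to
all nonnegative `𝓗₁`-measurable `f` and `𝓗₂`-measurable `g`. Boundedness makes the integrals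
finite, so the inequality passes to Bochner integrals.
-/

open MeasureTheory
open scoped ENNReal

namespace MeasureTheory

variable {Ω : Type*}

theorem lintegral_mul_le_of_forall_indicator {m' m : MeasurableSpace Ω} (hm : m' ≤ m)
    {μ : Measure Ω} {c : ℝ≥0∞} {g : Ω → ℝ≥0∞} (hg : Measurable g)
    (h_ind : ∀ (a : ℝ≥0∞) (A : Set Ω), MeasurableSet[m'] A →
      ∫⁻ ω, A.indicator (fun _ ↦ a) ω * g ω ∂μ
        ≤ c * (∫⁻ ω, A.indicator (fun _ ↦ a) ω ∂μ) * ∫⁻ ω, g ω ∂μ)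
    {f : Ω → ℝ≥0∞} (hf : Measurable[m'] f) :
    ∫⁻ ω, f ω * g ω ∂μ ≤ c * (∫⁻ ω, f ω ∂μ) * ∫⁻ ω, g ω ∂μ := by
  refine Measurable.ennreal_induction (fun a A hA ↦ h_ind a A hA) ?add ?iSup hf
  case add =>
    intro f₁ f₂ _ hf₁ _ ih₁ ih₂
    have hf₁m : Measurable[m] f₁ := hf₁.mono hm le_rfl
    calc ∫⁻ ω, (f₁ + f₂) ω * g ω ∂μ
        = ∫⁻ ω, f₁ ω * g ω ∂μ + ∫⁻ ω, f₂ ω * g ω ∂μ := by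
          simp only [Pi.add_apply, add_mul]
          exact lintegral_add_left (hf₁m.mul hg) _
      _ ≤ c * (∫⁻ ω, f₁ ω ∂μ) * ∫⁻ ω, g ω ∂μ
            + c * (∫⁻ ω, f₂ ω ∂μ) * ∫⁻ ω, g ω ∂μ := add_le_add ih₁ ih₂
      _ = c * (∫⁻ ω, (f₁ + f₂) ω ∂μ) * ∫⁻ ω, g ω ∂μ := by
          rw [Pi.add_def, lintegral_add_left hf₁m]
          ring
  case iSup =>
    intro f hf hmono ih
    have hfm : ∀ n, Measurable[m] (f n) := fun n ↦ (hf n).mono hm le_rfl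
    calc ∫⁻ ω, (⨆ n, f n ω) * g ω ∂μ
        = ⨆ n, ∫⁻ ω, f n ω * g ω ∂μ := by
          simp only [ENNReal.iSup_mul]
          exact lintegral_iSup (fun n ↦ (hfm n).mul hg)
            fun i j hij ω ↦ by gcongr; exact hmono hij ω
      _ ≤ ⨆ n, c * (∫⁻ ω, f n ω ∂μ) * ∫⁻ ω, g ω ∂μ := iSup_mono ih
      _ = c * (∫⁻ ω, ⨆ n, f n ω ∂μ) * ∫⁻ ω, g ω ∂μ := by
          rw [lintegral_iSup hfm hmono, ENNReal.mul_iSup, ENNReal.iSup_mul]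

theorem lintegral_mul_le_of_measure_inter_le {m₁ m₂ m : MeasurableSpace Ω}
    (h₁ : m₁ ≤ m) (h₂ : m₂ ≤ m) {μ : Measure Ω} {c : ℝ≥0∞}
    (hc : ∀ A B : Set Ω, MeasurableSet[m₁] A → MeasurableSet[m₂] B →
      μ (A ∩ B) ≤ c * μ A * μ B)
    {f g : Ω → ℝ≥0∞} (hf : Measurable[m₁] f) (hg : Measurable[m₂] g) :
    ∫⁻ ω, f ω * g ω ∂μ ≤ c * (∫⁻ ω, f ω ∂μ) * ∫⁻ ω, g ω ∂μ := by
  refine lintegral_mul_le_of_forall_indicator h₁ (hg.mono h₂ le_rfl) (fun a A hA ↦ ?_) hf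
  have hA' : MeasurableSet[m] A := h₁ _ hA
  -- With `a 𝟙_A` fixed, swap the factors and extend in the second variable.
  simp_rw [mul_comm (A.indicator _ _)]
  rw [mul_right_comm]
  refine lintegral_mul_le_of_forall_indicator h₂ (measurable_const.indicator hA')
    (fun b B hB ↦ ?_) hg
  have hB' : MeasurableSet[m] B := h₂ _ hB
  simp only [← Set.inter_indicator_mul, lintegral_indicator_const hA',
    lintegral_indicator_const hB', lintegral_indicator_const (hB'.inter hA')]
  calc b * a * μ (B ∩ A) ≤ b * a * (c * μ A * μ B) := by
        rw [Set.inter_comm]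
        gcongr
        exact hc A B hA hB
    _ = c * (b * μ B) * (a * μ A) := by ring

theorem measure_inter_le_of_abs_div_sub_one_le {m : MeasurableSpace Ω} {μ : Measure Ω}
    [IsFiniteMeasure μ] {A B : Set Ω} {γ : ℝ}
    (hψ : μ A * μ B ≠ 0 →
      |(μ (A ∩ B)).toReal / ((μ A).toReal * (μ B).toReal) - 1| ≤ γ) :
    μ (A ∩ B) ≤ ENNReal.ofReal (1 + γ) * μ A * μ B := by
  by_cases h0 : μ A * μ B = 0
  · have : μ (A ∩ B) = 0 := by
      rcases mul_eq_zero.1 h0 with hA | hB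
      · exact measure_mono_null Set.inter_subset_left hA
      · exact measure_mono_null Set.inter_subset_right hB
    simp [this]
  have hpos : 0 < (μ A).toReal * (μ B).toReal := by
    rw [← ENNReal.toReal_mul]
    exact ENNReal.toReal_pos h0 (by finiteness)
  have hratio : (μ (A ∩ B)).toReal / ((μ A).toReal * (μ B).toReal) ≤ 1 + γ := by
    linarith [(abs_le.1 (hψ h0)).2]
  calc μ (A ∩ B) = ENNReal.ofReal (μ (A ∩ B)).toReal :=
        (ENNReal.ofReal_toReal (by finiteness)).symm
    _ ≤ ENNReal.ofReal ((1 + γ) * ((μ A).toReal * (μ B).toReal)) :=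
        ENNReal.ofReal_le_ofReal ((div_le_iff₀ hpos).1 hratio)
    _ = ENNReal.ofReal (1 + γ) * μ A * μ B := by
        rw [ENNReal.ofReal_mul' hpos.le, ENNReal.ofReal_mul ENNReal.toReal_nonneg,
          ENNReal.ofReal_toReal (by finiteness), ENNReal.ofReal_toReal (by finiteness), mul_assoc]

end MeasureTheory

theorem psi_mixing_covariance_bound {Ω : Type*} {m : MeasurableSpace Ω}
    (μ : Measure Ω) [IsProbabilityMeasure μ]
    (H1 H2 : MeasurableSpace Ω) (h1 : H1 ≤ m) (h2 : H2 ≤ m)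
    (γ : ℝ) (hγ : 0 ≤ γ)
    (hpsi : ∀ A B : Set Ω, MeasurableSet[H1] A → MeasurableSet[H2] B →
      μ A * μ B ≠ 0 →
      |(μ (A ∩ B)).toReal / ((μ A).toReal * (μ B).toReal) - 1| ≤ γ)
    (X Y : Ω → ℝ)
    (hXmeas : Measurable[H1] X) (hYmeas : Measurable[H2] Y)
    (hXnn : ∀ ω, 0 ≤ X ω) (hYnn : ∀ ω, 0 ≤ Y ω)
    (hXbd : ∃ M, ∀ ω, X ω ≤ M) (hYbd : ∃ M, ∀ ω, Y ω ≤ M) :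
    ∫ ω, X ω * Y ω ∂μ ≤ (1 + γ) * (∫ ω, X ω ∂μ) * (∫ ω, Y ω ∂μ) := by
  obtain ⟨MX, hMX⟩ := hXbd
  obtain ⟨MY, hMY⟩ := hYbd
  have hX : Measurable[m] X := hXmeas.mono h1 le_rfl
  have hY : Measurable[m] Y := hYmeas.mono h2 le_rfl
  have hXint : Integrable X μ :=
    .of_mem_Icc 0 MX hX.aemeasurable (.of_forall fun ω ↦ ⟨hXnn ω, hMX ω⟩)
  have hYint : Integrable Y μ :=
    .of_mem_Icc 0 MY hY.aemeasurable (.of_forall fun ω ↦ ⟨hYnn ω, hMY ω⟩)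
  have h1γ : 0 ≤ 1 + γ := by linarith
  have hlintegral := lintegral_mul_le_of_measure_inter_le (μ := μ) h1 h2
    (fun A B hA hB ↦ measure_inter_le_of_abs_div_sub_one_le (hpsi A B hA hB))
    hXmeas.ennreal_ofReal hYmeas.ennreal_ofReal
  simp only [← ENNReal.ofReal_mul (hXnn _)] at hlintegral
  rw [← ofReal_integral_eq_lintegral_ofReal hXint (.of_forall hXnn),
    ← ofReal_integral_eq_lintegral_ofReal hYint (.of_forall hYnn),
    ← ENNReal.ofReal_mul h1γ, ← ENNReal.ofReal_mul' (integral_nonneg hYnn)]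
    at hlintegral
  rw [integral_eq_lintegral_of_nonneg_ae (.of_forall fun ω ↦ mul_nonneg (hXnn ω) (hYnn ω))
    (hX.mul hY).aestronglyMeasurable]
  exact ENNReal.toReal_le_of_le_ofReal
    (mul_nonneg (mul_nonneg h1γ (integral_nonneg hXnn)) (integral_nonneg hYnn)) hlintegral
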